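/- Variance of the Y-process: under realizability (f* ∈ F), for every g ∈ F one has E[Y(g)] = −‖g − f*‖_μ² ≤ 0, and there is a universal constant c > 0 such that Var[Y(g)] ≤ c · ‖g − f*‖_μ² = −c · E[Y(g)]. -/

import Mathlib

open MeasureTheory ProbabilityTheory
open scoped ENNReal NNReal

noncomputable section

/-- Expected value of `f (s, ·)` under the policy kernel at state `s`: `f(s,π)`. -/
def polExp {S A : Type*} [MeasurableSpace S] [MeasurableSpace A]
    (pol : Kernel S A) (f : S × A → ℝ) (s : S) : ℝ :=
  ∫ a, f (s, a) ∂(pol s)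

/-- The Bellman evaluation operator `(Tf)(s,a) = r(s,a) + γ E_{s' ∼ P(·|s,a)} f(s',π)`. -/
def bellmanOp {S A : Type*} [MeasurableSpace S] [MeasurableSpace A]
    (γ : ℝ) (rew : S × A → ℝ) (P : Kernel (S × A) S) (pol : Kernel S A)
    (f : S × A → ℝ) : S × A → ℝ :=
  fun sa => rew sa + γ * ∫ s', polExp pol f s' ∂(P sa)

/-- Squared `L²(μ)` norm: `‖h‖_μ² = E_μ h²`. -/
def l2sq {X : Type*} [MeasurableSpace X] (μ : Measure X) (h : X → ℝ) : ℝ :=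
  ∫ x, (h x) ^ 2 ∂μ

/-- `L²(μ)` norm `‖h‖_μ`. -/
def l2 {X : Type*} [MeasurableSpace X] (μ : Measure X) (h : X → ℝ) : ℝ :=
  Real.sqrt (l2sq μ h)

/-- Distance in `L²(μ)` from `h` to the class `F`: `inf_{g ∈ F} ‖g − h‖_μ`. -/
def projDist {S A : Type*} [MeasurableSpace S] [MeasurableSpace A]
    (μ : Measure (S × A)) (F : Set ((S × A) → ℝ)) (h : (S × A) → ℝ) : ℝ :=
  sInf ((fun g => l2 μ (fun x => g x - h x)) '' F)

/-- Bellman error `‖f − Tf‖_μ`. -/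
def bellErr {S A : Type*} [MeasurableSpace S] [MeasurableSpace A]
    (γ : ℝ) (rew : S × A → ℝ) (P : Kernel (S × A) S) (pol : Kernel S A)
    (μ : Measure (S × A)) (f : (S × A) → ℝ) : ℝ :=
  l2 μ (fun x => f x - bellmanOp γ rew P pol f x)

/-- The localized class `F(r) = {f ∈ F : ‖f − Tf‖_μ ≤ r}`. -/
def Floc {S A : Type*} [MeasurableSpace S] [MeasurableSpace A]
    (γ : ℝ) (rew : S × A → ℝ) (P : Kernel (S × A) S) (pol : Kernel S A)
    (μ : Measure (S × A)) (F : Set ((S × A) → ℝ)) (r : ℝ) : Set ((S × A) → ℝ) :=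
  {f ∈ F | bellErr γ rew P pol μ f ≤ r}

/-- The incompleteness function `I(r) = sup_{f ∈ F(r)} inf_{g ∈ F} ‖g − Tf‖_μ`. -/
def Iloc {S A : Type*} [MeasurableSpace S] [MeasurableSpace A]
    (γ : ℝ) (rew : S × A → ℝ) (P : Kernel (S × A) S) (pol : Kernel S A)
    (μ : Measure (S × A)) (F : Set ((S × A) → ℝ)) (r : ℝ) : ℝ :=
  sSup ((fun f => projDist μ F (bellmanOp γ rew P pol f)) '' Floc γ rew P pol μ F r)

/-- The incompleteness factor
`β = sup_{f ∈ F, ‖f−Tf‖_μ > 0} inf_{g ∈ F} ‖g − Tf‖_μ / ‖f − Tf‖_μ`. -/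
def betaFac {S A : Type*} [MeasurableSpace S] [MeasurableSpace A]
    (γ : ℝ) (rew : S × A → ℝ) (P : Kernel (S × A) S) (pol : Kernel S A)
    (μ : Measure (S × A)) (F : Set ((S × A) → ℝ)) : ℝ :=
  sSup ((fun f => projDist μ F (bellmanOp γ rew P pol f) / bellErr γ rew P pol μ f) ''
    {f ∈ F | 0 < bellErr γ rew P pol μ f})

/-- The population minimax loss `M(f) = ‖f − Tf‖_μ² − inf_{g ∈ F} ‖g − Tf‖_μ²`. -/
def minimaxLoss {S A : Type*} [MeasurableSpace S] [MeasurableSpace A]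
    (γ : ℝ) (rew : S × A → ℝ) (P : Kernel (S × A) S) (pol : Kernel S A)
    (μ : Measure (S × A)) (F : Set ((S × A) → ℝ)) (f : (S × A) → ℝ) : ℝ :=
  l2sq μ (fun x => f x - bellmanOp γ rew P pol f x) -
    sInf ((fun g => l2sq μ (fun x => g x - bellmanOp γ rew P pol f x)) '' F)

/-- One step of the state-action chain: transition by `P` then act by `pol`. -/
def stepMeas {S A : Type*} [MeasurableSpace S] [MeasurableSpace A]
    (P : Kernel (S × A) S) (pol : Kernel S A) (sa : S × A) : Measure (S × A) :=
  (P sa).bind (fun s' => (pol s').map (fun a' => (s', a')))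

/-- The law `P_h` of `(S_h, A_h)` when following `pol` from the state `s0`. -/
def stepLaw {S A : Type*} [MeasurableSpace S] [MeasurableSpace A]
    (P : Kernel (S × A) S) (pol : Kernel S A) (s0 : S) : ℕ → Measure (S × A)
  | 0 => (pol s0).map (fun a => (s0, a))
  | (h + 1) => (stepLaw P pol s0 h).bind (stepMeas P pol)

/-- The discounted occupancy measure `d^π = (1−γ) Σ_{h≥0} γ^h P_h`. -/
def occMeas {S A : Type*} [MeasurableSpace S] [MeasurableSpace A]
    (γ : ℝ) (P : Kernel (S × A) S) (pol : Kernel S A) (s0 : S) : Measure (S × A) :=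
  ENNReal.ofReal (1 - γ) •
    Measure.sum (fun h : ℕ => ENNReal.ofReal γ ^ h • stepLaw P pol s0 h)

/-- The prediction error `E(f) = (f* − f)(s₀, π)`. -/
def predErr {S A : Type*} [MeasurableSpace S] [MeasurableSpace A]
    (pol : Kernel S A) (fstar f : S × A → ℝ) (s0 : S) : ℝ :=
  polExp pol (fun x => fstar x - f x) s0

/-- The concentrability coefficient `C = sup_{f ∈ F} ‖f − Tf‖_π² / ‖f − Tf‖_μ²`. -/
def concCoef {S A : Type*} [MeasurableSpace S] [MeasurableSpace A]
    (γ : ℝ) (rew : S × A → ℝ) (P : Kernel (S × A) S) (pol : Kernel S A)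
    (μ dpi : Measure (S × A)) (F : Set ((S × A) → ℝ)) : ℝ :=
  sSup ((fun f => l2sq dpi (fun x => f x - bellmanOp γ rew P pol f x) /
      l2sq μ (fun x => f x - bellmanOp γ rew P pol f x)) '' F)

/-- The law of a data tuple `(s, a, R, s')` with `(s,a) ∼ μ`, `R ∼ RL(s,a)`,
`s' ∼ P(·|s,a)`. -/
def tupleLaw {S A : Type*} [MeasurableSpace S] [MeasurableSpace A]
    (μ : Measure (S × A)) (RL : Kernel (S × A) ℝ) (P : Kernel (S × A) S) :
    Measure ((S × A) × ℝ × S) :=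
  μ.bind (fun sa => ((RL sa).prod (P sa)).map (fun rs => (sa, rs)))

/-- The squared TD cost `C(g,f) = (g(s,a) − R − γ f(s',π))²` of a tuple. -/
def tdCost {S A : Type*} [MeasurableSpace S] [MeasurableSpace A]
    (γ : ℝ) (pol : Kernel S A) (g f : S × A → ℝ) (t : (S × A) × ℝ × S) : ℝ :=
  (g t.1 - t.2.1 - γ * polExp pol f t.2.2) ^ 2

/-- The empirical loss `L̂(g,f)`: the average of the squared TD cost over the dataset. -/
def empLoss {S A : Type*} [MeasurableSpace S] [MeasurableSpace A]
    (γ : ℝ) (pol : Kernel S A) {n : ℕ} (D : Fin n → (S × A) × ℝ × S)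
    (g f : S × A → ℝ) : ℝ :=
  (∑ i, tdCost γ pol g f (D i)) / n

/-- The empirical minimax objective `M̂(f) = L̂(f,f) − inf_{g ∈ F} L̂(g,f)`. -/
def empMinimax {S A : Type*} [MeasurableSpace S] [MeasurableSpace A]
    (γ : ℝ) (pol : Kernel S A) (F : Set ((S × A) → ℝ)) {n : ℕ}
    (D : Fin n → (S × A) × ℝ × S) (f : S × A → ℝ) : ℝ :=
  empLoss γ pol D f f - sInf ((fun g => empLoss γ pol D g f) '' F)

/-- `f̂` is an empirical minimizer of `M̂` over `F`. -/
def IsEmpMinimizer {S A : Type*} [MeasurableSpace S] [MeasurableSpace A]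
    (γ : ℝ) (pol : Kernel S A) (F : Set ((S × A) → ℝ)) {n : ℕ}
    (D : Fin n → (S × A) × ℝ × S) (fhat : S × A → ℝ) : Prop :=
  fhat ∈ F ∧ ∀ f ∈ F, empMinimax γ pol F D fhat ≤ empMinimax γ pol F D f

/-- The law of a single Rademacher sign: `±1` with probability `1/2` each. -/
def signMeas : Measure ℝ :=
  (2⁻¹ : ℝ≥0∞) • Measure.dirac (1 : ℝ) + (2⁻¹ : ℝ≥0∞) • Measure.dirac (-1 : ℝ)

/-- Rademacher complexity of a class `H` with `n` covariates drawn i.i.d. from `ξ`: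
`R_n[H] = E sup_{h ∈ H} |(1/n) Σ_i ε_i h(x_i)|`. -/
def radComp {X : Type*} [MeasurableSpace X] (ξ : Measure X) (n : ℕ)
    (H : Set (X → ℝ)) : ℝ :=
  ∫ p, sSup ((fun h => |(∑ i, p.2 i * h (p.1 i)) / n|) '' H)
    ∂((Measure.pi (fun _ : Fin n => ξ)).prod (Measure.pi (fun _ : Fin n => signMeas)))

/-- The `X`-process `X(f) = C(f,f) − C(g_f, f)` as a function of the data tuple. -/
def Xproc {S A : Type*} [MeasurableSpace S] [MeasurableSpace A]
    (γ : ℝ) (pol : Kernel S A) (gf : ((S × A) → ℝ) → (S × A) → ℝ)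
    (f : S × A → ℝ) : (S × A) × ℝ × S → ℝ :=
  fun t => tdCost γ pol f f t - tdCost γ pol (gf f) f t

/-- The `Y`-process `Y(g) = C(f*,f*) − C(g, f*)` as a function of the data tuple. -/
def Yproc {S A : Type*} [MeasurableSpace S] [MeasurableSpace A]
    (γ : ℝ) (pol : Kernel S A) (fstar g : S × A → ℝ) : (S × A) × ℝ × S → ℝ :=
  fun t => tdCost γ pol fstar fstar t - tdCost γ pol g fstar t

end

/-!
Write `Δ = g − f*` and `δ = f*(s,a) − R − γ f*(s',π)` for the temporal-difference error of `f*`.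
Expanding the squares gives `Y(g) = −Δ(s,a) (2δ + Δ(s,a))`. Since `f*` is a fixed point of the
Bellman operator, `δ` has conditional mean zero given `(s,a)`, so the cross term `Δ δ` vanishes in
expectation and `E[Y(g)] = −‖Δ‖_μ²`. Moreover `|Δ| ≤ 2` and `|δ| ≤ 3`, hence
`Var[Y(g)] ≤ E[Y(g)²] ≤ 8² E[Δ²] = 64 ‖Δ‖_μ²`.
-/

noncomputable section

section CompProd

variable {α β : Type*} [MeasurableSpace α] [MeasurableSpace β] {μ : Measure α} {κ : Kernel α β}

theorem integral_compProd_mul_eq_zero [SFinite μ] [IsSFiniteKernel κ] {Δ : α → ℝ}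
    {δ : α × β → ℝ} (hint : Integrable (fun t => Δ t.1 * δ t) (μ ⊗ₘ κ))
    (hmean : ∀ᵐ x ∂μ, ∫ y, δ (x, y) ∂κ x = 0) :
    ∫ t, Δ t.1 * δ t ∂(μ ⊗ₘ κ) = 0 := by
  rw [Measure.integral_compProd hint]
  refine integral_eq_zero_of_ae ?_
  filter_upwards [hmean] with x hx
  rw [integral_const_mul, hx, mul_zero, Pi.zero_apply]

theorem integral_compProd_fst [SFinite μ] [IsMarkovKernel κ] {h : α → ℝ}
    (hh : AEStronglyMeasurable h μ) :
    ∫ t, h t.1 ∂(μ ⊗ₘ κ) = ∫ x, h x ∂μ := by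
  rw [← integral_map measurable_fst.aemeasurable, ← Measure.fst, Measure.fst_compProd]
  rwa [← Measure.fst, Measure.fst_compProd]

end CompProd

theorem variance_le_integral_of_sq_le {Ω : Type*} [MeasurableSpace Ω] {ρ : Measure Ω}
    [IsProbabilityMeasure ρ] {Z D : Ω → ℝ} (hZ : AEStronglyMeasurable Z ρ) (hD : Integrable D ρ)
    (hle : ∀ᵐ ω ∂ρ, Z ω ^ 2 ≤ D ω) :
    variance Z ρ ≤ ∫ ω, D ω ∂ρ :=
  (variance_le_expectation_sq hZ).trans <|
    integral_mono_of_nonneg (.of_forall fun ω => sq_nonneg (Z ω)) hD hle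

section TDError

variable {S A : Type*} [MeasurableSpace S] [MeasurableSpace A] {γ : ℝ} {rew : S × A → ℝ}
  {P : Kernel (S × A) S} {pol : Kernel S A} {μ : Measure (S × A)} {RL : Kernel (S × A) ℝ}
  {f g : S × A → ℝ}

def tdErr (γ : ℝ) (pol : Kernel S A) (f : S × A → ℝ) (t : (S × A) × ℝ × S) : ℝ :=
  f t.1 - t.2.1 - γ * polExp pol f t.2.2

theorem Yproc_eq (t : (S × A) × ℝ × S) :
    Yproc γ pol f g t =
      -(2 * ((g t.1 - f t.1) * tdErr γ pol f t)) - (g t.1 - f t.1) ^ 2 := by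
  simp only [Yproc, tdCost, tdErr]
  ring

theorem measurable_polExp [IsSFiniteKernel pol] (hf : Measurable f) :
    Measurable (polExp pol f) :=
  hf.stronglyMeasurable.integral_kernel_prod_right'.measurable

theorem abs_polExp_le [IsMarkovKernel pol] {C : ℝ} (hf : ∀ x, |f x| ≤ C) (s : S) :
    |polExp pol f s| ≤ C := by
  simpa [polExp] using norm_integral_le_of_norm_le_const (μ := pol s)
    (.of_forall fun a => (Real.norm_eq_abs _).trans_le (hf (s, a)))

theorem measurable_tdErr [IsSFiniteKernel pol] (hf : Measurable f) :
    Measurable (tdErr γ pol f) := by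
  have := measurable_polExp (pol := pol) hf
  unfold tdErr
  fun_prop

theorem abs_tdErr_le [IsMarkovKernel pol] (hγ0 : 0 ≤ γ) (hγ1 : γ ≤ 1) (hf : ∀ x, |f x| ≤ 1)
    {t : (S × A) × ℝ × S} (hR : t.2.1 ∈ Set.Icc (0 : ℝ) 1) :
    |tdErr γ pol f t| ≤ 3 := by
  have hγV : |γ * polExp pol f t.2.2| ≤ 1 := by
    rw [abs_mul, abs_of_nonneg hγ0]
    exact mul_le_one₀ hγ1 (abs_nonneg _) (abs_polExp_le hf _)
  have hft := abs_le.1 (hf t.1)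
  have := abs_le.1 hγV
  rw [tdErr, abs_le]
  constructor <;> linarith [hR.1, hR.2]

theorem integral_tdErr_prod [IsMarkovKernel pol] (sa : S × A) [IsProbabilityMeasure (RL sa)]
    [IsProbabilityMeasure (P sa)] (hRL : RL sa (Set.Icc 0 1)ᶜ = 0)
    (hmean : ∫ u, u ∂(RL sa) = rew sa) (hf : Measurable f) (hfb : ∀ x, |f x| ≤ 1) :
    ∫ rs, tdErr γ pol f (sa, rs) ∂(RL sa).prod (P sa) = f sa - bellmanOp γ rew P pol f sa := by
  have hR : Integrable (fun u : ℝ => u) (RL sa) :=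
    .of_bound measurable_id.aestronglyMeasurable 1 <| by
      filter_upwards [ae_iff.2 hRL] with u hu
      exact abs_le.2 ⟨by linarith [hu.1], hu.2⟩
  have hV : Integrable (polExp pol f) (P sa) :=
    .of_bound (measurable_polExp hf).aestronglyMeasurable 1
      (.of_forall fun s => abs_polExp_le hfb s)
  have hfst : Integrable (fun rs : ℝ × S => f sa - rs.1) ((RL sa).prod (P sa)) :=
    (integrable_const _).sub (hR.comp_fst _)
  have hsnd : Integrable (fun rs : ℝ × S => γ * polExp pol f rs.2) ((RL sa).prod (P sa)) :=
    (hV.comp_snd _).const_mul γ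
  simp only [tdErr]
  rw [integral_sub hfst hsnd, integral_sub (integrable_const _) (hR.comp_fst _),
    integral_const_mul, integral_const, integral_fun_fst (fun u : ℝ => u), integral_fun_snd]
  simp [hmean, bellmanOp]
  ring

theorem tupleLaw_eq_compProd [SFinite μ] [IsSFiniteKernel RL] [IsSFiniteKernel P] :
    tupleLaw μ RL P = μ ⊗ₘ (RL ×ₖ P) := by
  rw [Measure.compProd_eq_comp_prod, tupleLaw]
  congr 1
  funext sa
  rw [Kernel.prod_apply, Kernel.id_apply, Measure.dirac_prod, Kernel.prod_apply]

theorem ae_reward_mem_Icc_tupleLaw [SFinite μ] [IsSFiniteKernel RL] [IsSFiniteKernel P]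
    (hRL : ∀ x, RL x (Set.Icc 0 1)ᶜ = 0) :
    ∀ᵐ t ∂(tupleLaw μ RL P), t.2.1 ∈ Set.Icc (0 : ℝ) 1 := by
  rw [tupleLaw_eq_compProd]
  refine Measure.ae_compProd_of_ae_ae (measurable_snd.fst measurableSet_Icc)
    (.of_forall fun sa => ?_)
  rw [Kernel.prod_apply]
  exact Measure.quasiMeasurePreserving_fst.ae (ae_iff.2 (hRL sa))

end TDError

section YProcess

variable {S A : Type*} [MeasurableSpace S] [MeasurableSpace A] {γ : ℝ} {rew : S × A → ℝ}
  {P : Kernel (S × A) S} {pol : Kernel S A} {μ : Measure (S × A)} {RL : Kernel (S × A) ℝ}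
  {fstar g : S × A → ℝ}
  [IsMarkovKernel P] [IsMarkovKernel pol] [IsProbabilityMeasure μ] [IsMarkovKernel RL]

instance : IsProbabilityMeasure (tupleLaw μ RL P) := by
  rw [tupleLaw_eq_compProd]
  infer_instance

theorem integral_fst_tupleLaw {h : S × A → ℝ} (hh : Measurable h) :
    ∫ t, h t.1 ∂(tupleLaw μ RL P) = ∫ x, h x ∂μ := by
  rw [tupleLaw_eq_compProd, integral_compProd_fst hh.aestronglyMeasurable]

theorem ae_abs_tdErr_le_tupleLaw (hγ0 : 0 ≤ γ) (hγ1 : γ ≤ 1)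
    (hRL : ∀ x, RL x (Set.Icc 0 1)ᶜ = 0) (hfb : ∀ x, |fstar x| ≤ 1) :
    ∀ᵐ t ∂(tupleLaw μ RL P), |tdErr γ pol fstar t| ≤ 3 := by
  filter_upwards [ae_reward_mem_Icc_tupleLaw hRL] with t ht using abs_tdErr_le hγ0 hγ1 hfb ht

theorem integral_Yproc (hγ0 : 0 ≤ γ) (hγ1 : γ ≤ 1) (hRL : ∀ x, RL x (Set.Icc 0 1)ᶜ = 0)
    (hmean : ∀ x, ∫ u, u ∂(RL x) = rew x) (hfm : Measurable fstar) (hfb : ∀ x, |fstar x| ≤ 1)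
    (hfix : bellmanOp γ rew P pol fstar = fstar) (hgm : Measurable g) (hgb : ∀ x, |g x| ≤ 1) :
    ∫ t, Yproc γ pol fstar g t ∂(tupleLaw μ RL P) = -l2sq μ (fun x => g x - fstar x) := by
  set Δ : S × A → ℝ := fun x => g x - fstar x
  have hΔm : Measurable Δ := hgm.sub hfm
  have hΔb : ∀ x, |Δ x| ≤ 2 := fun x => (abs_sub _ _).trans (by linarith [hgb x, hfb x])
  have hcross : Integrable (fun t => Δ t.1 * tdErr γ pol fstar t) (tupleLaw μ RL P) :=
    .of_bound ((hΔm.comp measurable_fst).mul (measurable_tdErr hfm)).aestronglyMeasurable 6 <| by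
      filter_upwards [ae_abs_tdErr_le_tupleLaw (pol := pol) hγ0 hγ1 hRL hfb] with t hδ
      rw [norm_mul, Real.norm_eq_abs, Real.norm_eq_abs]
      linarith [mul_le_mul (hΔb t.1) hδ (abs_nonneg _) zero_le_two]
  have hsq : Integrable (fun t => Δ t.1 ^ 2) (tupleLaw μ RL P) :=
    .of_bound ((hΔm.comp measurable_fst).pow_const 2).aestronglyMeasurable 4 <|
      .of_forall fun t => by
        rw [Real.norm_eq_abs, abs_of_nonneg (by positivity)]
        nlinarith [abs_le.1 (hΔb t.1)]
  have hmean_zero : ∀ sa, ∫ rs, tdErr γ pol fstar (sa, rs) ∂(RL ×ₖ P) sa = 0 := fun sa => by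
    rw [Kernel.prod_apply, integral_tdErr_prod sa (hRL sa) (hmean sa) hfm hfb, hfix, sub_self]
  rw [show Yproc γ pol fstar g = fun t => -(2 * (Δ t.1 * tdErr γ pol fstar t)) - Δ t.1 ^ 2 from
      funext Yproc_eq,
    integral_sub (f := fun t => -(2 * (Δ t.1 * tdErr γ pol fstar t))) (hcross.const_mul 2).neg hsq,
    integral_neg, integral_const_mul, integral_fst_tupleLaw (hΔm.pow_const 2),
    tupleLaw_eq_compProd, integral_compProd_mul_eq_zero (by rwa [← tupleLaw_eq_compProd])
      (.of_forall hmean_zero)]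
  simp [l2sq, Δ]

theorem variance_Yproc_le (hγ0 : 0 ≤ γ) (hγ1 : γ ≤ 1) (hRL : ∀ x, RL x (Set.Icc 0 1)ᶜ = 0)
    (hfm : Measurable fstar) (hfb : ∀ x, |fstar x| ≤ 1) (hgm : Measurable g)
    (hgb : ∀ x, |g x| ≤ 1) :
    variance (Yproc γ pol fstar g) (tupleLaw μ RL P) ≤
      64 * l2sq μ (fun x => g x - fstar x) := by
  set Δ : S × A → ℝ := fun x => g x - fstar x
  have hΔm : Measurable Δ := hgm.sub hfm
  have hΔb : ∀ x, |Δ x| ≤ 2 := fun x => (abs_sub _ _).trans (by linarith [hgb x, hfb x])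
  have hYm : Measurable (Yproc γ pol fstar g) := by
    have := measurable_polExp (pol := pol) hfm
    unfold Yproc tdCost
    fun_prop
  have hbound : Integrable (fun t => 64 * Δ t.1 ^ 2) (tupleLaw μ RL P) :=
    .of_bound (((hΔm.comp measurable_fst).pow_const 2).const_mul 64).aestronglyMeasurable 256 <|
      .of_forall fun t => by
        rw [Real.norm_eq_abs, abs_of_nonneg (by positivity)]
        nlinarith [abs_le.1 (hΔb t.1)]
  calc variance (Yproc γ pol fstar g) (tupleLaw μ RL P)
      ≤ ∫ t, 64 * Δ t.1 ^ 2 ∂(tupleLaw μ RL P) := by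
        refine variance_le_integral_of_sq_le hYm.aestronglyMeasurable hbound ?_
        filter_upwards [ae_abs_tdErr_le_tupleLaw (pol := pol) hγ0 hγ1 hRL hfb] with t hδ
        have hfactor : (2 * tdErr γ pol fstar t + Δ t.1) ^ 2 ≤ 64 := by
          nlinarith [abs_le.1 hδ, abs_le.1 (hΔb t.1)]
        calc Yproc γ pol fstar g t ^ 2 = Δ t.1 ^ 2 * (2 * tdErr γ pol fstar t + Δ t.1) ^ 2 := by
              rw [Yproc_eq]; ring
          _ ≤ Δ t.1 ^ 2 * 64 := mul_le_mul_of_nonneg_left hfactor (sq_nonneg _)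
          _ = 64 * Δ t.1 ^ 2 := mul_comm _ _
    _ = 64 * l2sq μ Δ := by
        rw [integral_const_mul, integral_fst_tupleLaw (hΔm.pow_const 2), l2sq]

end YProcess

/-- Variance of the `Y`-process: under realizability, for every
`g ∈ F`, `E[Y(g)] = −‖g − f*‖_μ² ≤ 0`, and there is a universal constant `c > 0`
such that `Var[Y(g)] ≤ c·‖g − f*‖_μ² = −c·E[Y(g)]`. -/
theorem variance_of_Y_process :
    ∃ c : ℝ, 0 < c ∧
      ∀ (S A : Type) [MeasurableSpace S] [MeasurableSpace A]
        (γ : ℝ), 0 ≤ γ → γ < 1 →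
      ∀ (rew : S × A → ℝ), Measurable rew → (∀ x, rew x ∈ Set.Icc (0 : ℝ) 1) →
      ∀ (P : Kernel (S × A) S), IsMarkovKernel P →
      ∀ (pol : Kernel S A), IsMarkovKernel pol →
      ∀ (μ : Measure (S × A)), IsProbabilityMeasure μ →
      -- the reward kernel, supported on `[0,1]` with conditional mean `rew`
      ∀ (RL : Kernel (S × A) ℝ), IsMarkovKernel RL →
        (∀ x, (RL x) (Set.Icc (0 : ℝ) 1)ᶜ = 0) →
        (∀ x, (∫ u, u ∂(RL x)) = rew x) →
      -- a class of measurable functions bounded by one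
      ∀ (F : Set ((S × A) → ℝ)),
        (∀ f ∈ F, Measurable f) → (∀ f ∈ F, ∀ x, |f x| ≤ 1) →
      -- realizability: `f*` is a bounded measurable fixed point of `T` lying in `F`
      ∀ (fstar : (S × A) → ℝ), Measurable fstar → (∀ x, |fstar x| ≤ 1) →
        bellmanOp γ rew P pol fstar = fstar → fstar ∈ F →
      ∀ g ∈ F,
        (∫ t, Yproc γ pol fstar g t ∂(tupleLaw μ RL P)) =
            -(l2sq μ (fun x => g x - fstar x)) ∧
        (∫ t, Yproc γ pol fstar g t ∂(tupleLaw μ RL P)) ≤ 0 ∧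
        variance (Yproc γ pol fstar g) (tupleLaw μ RL P) ≤
          c * l2sq μ (fun x => g x - fstar x) ∧
        c * l2sq μ (fun x => g x - fstar x) =
          -(c * ∫ t, Yproc γ pol fstar g t ∂(tupleLaw μ RL P)) := by
  refine ⟨64, by norm_num, ?_⟩
  intro S A _ _ γ hγ0 hγ1 rew _ _ P _ pol _ μ _ RL _ hRL hRLmean F hFm hFb fstar hfm hfb hfix _
    g hg
  have hE := integral_Yproc (μ := μ) hγ0 hγ1.le hRL hRLmean hfm hfb hfix (hFm g hg) (hFb g hg)
  have hnorm : 0 ≤ l2sq μ (fun x => g x - fstar x) := integral_nonneg fun x => sq_nonneg _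
  exact ⟨hE, hE ▸ neg_nonpos.2 hnorm,
    variance_Yproc_le hγ0 hγ1.le hRL hfm hfb (hFm g hg) (hFb g hg), by rw [hE]; ring⟩

end
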